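/- arXiv:1506.08227 — 7 statements merged into one kernel-verified Lean document; each statement's English description precedes it below -/
import Mathlib

section
/- In the extended MacLane combinatorics C_M, the line L_1 is the unique line contained in two members of P_M of cardinality 4 (namely {L1,L4,L5,L6} and {L1,L7,L8,L9}); consequently every automorphism of C_M fixes L_1. -/
set_option maxRecDepth 4000


/-- The point set of the extended MacLane combinatorics, with lines
`L₁,…,L₉` encoded as `0,…,8 : Fin 9`. -/
def extendedMacLane : Finset (Finset (Fin 9)) :=
  { {0,1}, {0,2}, {0,3,4,5}, {0,6,7,8}, {1,2}, {1,3,8}, {1,4,7}, {1,5,6},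
    {2,3,6}, {2,4,8}, {2,5,7}, {3,7}, {4,6}, {5,8} }

lemma card4_mem : ∀ p ∈ extendedMacLane, p.card = 4 →
    p = ({0,3,4,5} : Finset (Fin 9)) ∨ p = ({0,6,7,8} : Finset (Fin 9)) := by
  decide

/-- `L₁` (encoded `0`) is the unique line lying on two members of
`P_M` of cardinality `4`; consequently every automorphism of the extended
MacLane combinatorics fixes `L₁`. -/
theorem extendedMacLane_L1_fixed :
    (∀ i : Fin 9,
      (extendedMacLane.filter (fun p => i ∈ p ∧ p.card = 4)).card = 2 ↔ i = 0) ∧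
    (∀ σ : Equiv.Perm (Fin 9),
      (∀ p : Finset (Fin 9), p ∈ extendedMacLane ↔ p.image σ ∈ extendedMacLane) →
      σ 0 = 0) := by
  constructor
  · decide
  · intro σ hσ
    have hA : ({0,3,4,5} : Finset (Fin 9)) ∈ extendedMacLane := by decide
    have hB : ({0,6,7,8} : Finset (Fin 9)) ∈ extendedMacLane := by decide
    have hA' := (hσ _).mp hA
    have hB' := (hσ _).mp hB
    have cA : (({0,3,4,5} : Finset (Fin 9)).image σ).card = 4 := by
      rw [Finset.card_image_of_injective _ σ.injective]; decide
    have cB : (({0,6,7,8} : Finset (Fin 9)).image σ).card = 4 := by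
      rw [Finset.card_image_of_injective _ σ.injective]; decide
    have mA : σ 0 ∈ ({0,3,4,5} : Finset (Fin 9)).image σ :=
      Finset.mem_image_of_mem σ (by decide)
    have mB : σ 0 ∈ ({0,6,7,8} : Finset (Fin 9)).image σ :=
      Finset.mem_image_of_mem σ (by decide)
    have hne : ({0,3,4,5} : Finset (Fin 9)).image σ ≠
        ({0,6,7,8} : Finset (Fin 9)).image σ := by
      intro h
      have := Finset.image_injective σ.injective h
      exact absurd this (by decide)
    rcases card4_mem _ hA' cA with h1 | h1 <;>
      rcases card4_mem _ hB' cB with h2 | h2 <;>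
      rw [h1] at mA <;> rw [h2] at mB
    · exact absurd (h1.trans h2.symm) hne
    · have : σ 0 ∈ ({0,3,4,5} : Finset (Fin 9)) ∩ ({0,6,7,8} : Finset (Fin 9)) :=
        Finset.mem_inter.mpr ⟨mA, mB⟩
      revert this; generalize σ 0 = x; revert x; decide
    · have : σ 0 ∈ ({0,3,4,5} : Finset (Fin 9)) ∩ ({0,6,7,8} : Finset (Fin 9)) :=
        Finset.mem_inter.mpr ⟨mB, mA⟩
      revert this; generalize σ 0 = x; revert x; decide
    · exact absurd (h1.trans h2.symm) hne
end

section
/- The automorphism group of the extended MacLane combinatorics C_M is isomorphic to the dihedral group of order 12 (equivalently to Σ_3 × ℤ/2). -/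
/-- The automorphism group of the extended MacLane combinatorics, as the
subgroup of permutations of the nine lines preserving the point set. -/
def extendedMacLaneAut : Subgroup (Equiv.Perm (Fin 9)) where
  carrier := {σ | ∀ p : Finset (Fin 9), p ∈ extendedMacLane ↔ p.image σ ∈ extendedMacLane}
  one_mem' := by intro p; simp
  mul_mem' := by
    intro σ τ hσ hτ p
    rw [hτ p, hσ (p.image τ), Finset.image_image]
    rfl
  inv_mem' := by
    intro σ hσ p
    have h := (hσ (p.image (⇑(σ⁻¹)))).symm
    rwa [Finset.image_image, show (⇑σ ∘ ⇑σ⁻¹) = id by ext x; simp, Finset.image_id] at h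


def aa : Equiv.Perm (Fin 9) := ⟨![0,2,1,6,8,7,5,4,3], ![0,2,1,8,7,6,3,5,4], by decide, by decide⟩
def bb : Equiv.Perm (Fin 9) := ⟨![0,1,2,6,7,8,3,4,5], ![0,1,2,6,7,8,3,4,5], by decide, by decide⟩

def fdih : DihedralGroup 6 → Equiv.Perm (Fin 9)
  | DihedralGroup.r i => aa ^ i.val
  | DihedralGroup.sr i => bb * aa ^ i.val

lemma perm_eq_of_values (σ τ : Equiv.Perm (Fin 9))
    (h : (σ 0, σ 1, σ 2, σ 3, σ 4, σ 5, σ 6, σ 7, σ 8) =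
         (τ 0, τ 1, τ 2, τ 3, τ 4, τ 5, τ 6, τ 7, τ 8)) : σ = τ := by
  simp only [Prod.mk.injEq] at h
  obtain ⟨h0, h1, h2, h3, h4, h5, h6, h7, h8⟩ := h
  apply Equiv.ext
  intro i
  fin_cases i
  exacts [h0, h1, h2, h3, h4, h5, h6, h7, h8]

set_option maxHeartbeats 4000000 in
lemma macLane_key (σ : Equiv.Perm (Fin 9))
    (h : ∀ p ∈ extendedMacLane, p.image σ ∈ extendedMacLane) :
    ∃ x : DihedralGroup 6, fdih x = σ := by
  have hne : ∀ i j : Fin 9, i ≠ j → σ i ≠ σ j := fun i j hij hh => hij (σ.injective hh)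
  have hA := h {0,3,4,5} (by decide)
  have hB := h {0,6,7,8} (by decide)
  have hcA : (Finset.image σ {0,3,4,5}).card = 4 := by
    rw [Finset.card_image_of_injective _ σ.injective]; decide
  have hcB : (Finset.image σ {0,6,7,8}).card = 4 := by
    rw [Finset.card_image_of_injective _ σ.injective]; decide
  have m0A : σ 0 ∈ Finset.image σ {0,3,4,5} := Finset.mem_image_of_mem σ (by decide)
  have m3A : σ 3 ∈ Finset.image σ {0,3,4,5} := Finset.mem_image_of_mem σ (by decide)
  have m4A : σ 4 ∈ Finset.image σ {0,3,4,5} := Finset.mem_image_of_mem σ (by decide)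
  have m5A : σ 5 ∈ Finset.image σ {0,3,4,5} := Finset.mem_image_of_mem σ (by decide)
  have m0B : σ 0 ∈ Finset.image σ {0,6,7,8} := Finset.mem_image_of_mem σ (by decide)
  have p01 : ({σ 0, σ 1} : Finset (Fin 9)) ∈ extendedMacLane := by
    have := h {0,1} (by decide); simpa using this
  have p02 : ({σ 0, σ 2} : Finset (Fin 9)) ∈ extendedMacLane := by
    have := h {0,2} (by decide); simpa using this
  have p37 : ({σ 3, σ 7} : Finset (Fin 9)) ∈ extendedMacLane := by
    have := h {3,7} (by decide); simpa using this
  have p46 : ({σ 4, σ 6} : Finset (Fin 9)) ∈ extendedMacLane := by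
    have := h {4,6} (by decide); simpa using this
  have p58 : ({σ 5, σ 8} : Finset (Fin 9)) ∈ extendedMacLane := by
    have := h {5,8} (by decide); simpa using this
  have p138 : ({σ 1, σ 3, σ 8} : Finset (Fin 9)) ∈ extendedMacLane := by
    have := h {1,3,8} (by decide); simpa using this
  have c01 : ({σ 0, σ 1} : Finset (Fin 9)).card = 2 := Finset.card_pair (hne 0 1 (by decide))
  have c02 : ({σ 0, σ 2} : Finset (Fin 9)).card = 2 := Finset.card_pair (hne 0 2 (by decide))
  have c37 : ({σ 3, σ 7} : Finset (Fin 9)).card = 2 := Finset.card_pair (hne 3 7 (by decide))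
  have c46 : ({σ 4, σ 6} : Finset (Fin 9)).card = 2 := Finset.card_pair (hne 4 6 (by decide))
  have c58 : ({σ 5, σ 8} : Finset (Fin 9)).card = 2 := Finset.card_pair (hne 5 8 (by decide))
  have q01a : σ 0 ∈ ({σ 0, σ 1} : Finset (Fin 9)) := by simp
  have q01b : σ 1 ∈ ({σ 0, σ 1} : Finset (Fin 9)) := by simp
  have q02a : σ 0 ∈ ({σ 0, σ 2} : Finset (Fin 9)) := by simp
  have q02b : σ 2 ∈ ({σ 0, σ 2} : Finset (Fin 9)) := by simp
  have q37a : σ 3 ∈ ({σ 3, σ 7} : Finset (Fin 9)) := by simp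
  have q37b : σ 7 ∈ ({σ 3, σ 7} : Finset (Fin 9)) := by simp
  have q46a : σ 4 ∈ ({σ 4, σ 6} : Finset (Fin 9)) := by simp
  have q46b : σ 6 ∈ ({σ 4, σ 6} : Finset (Fin 9)) := by simp
  have q58a : σ 5 ∈ ({σ 5, σ 8} : Finset (Fin 9)) := by simp
  have q58b : σ 8 ∈ ({σ 5, σ 8} : Finset (Fin 9)) := by simp
  simp only [extendedMacLane, Finset.mem_insert, Finset.mem_singleton] at hA hB p01 p02 p37 p46 p58
  -- stage A : image of {0,3,4,5}
  rcases hA with eA|eA|eA|eA|eA|eA|eA|eA|eA|eA|eA|eA|eA|eA <;>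
    first | (rw [eA] at hcA; exact absurd hcA (by decide)) | skip
  -- stage B : image of {0,6,7,8}
  all_goals
    rcases hB with eB|eB|eB|eB|eB|eB|eB|eB|eB|eB|eB|eB|eB|eB <;>
      first
        | (rw [eB] at hcB; exact absurd hcB (by decide))
        | (exact absurd (Finset.image_injective σ.injective (eA.trans eB.symm)) (by decide))
        | skip
  -- σ 0
  all_goals rw [eA] at m0A m3A m4A m5A
  all_goals rw [eB] at m0B
  all_goals simp only [Finset.mem_insert, Finset.mem_singleton] at m0A m0B m3A m4A m5A
  all_goals
    have e0 : σ 0 = 0 := by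
      rcases m0A with e|e|e|e <;> rcases m0B with e'|e'|e'|e' <;>
        first | exact e | exact absurd (e.symm.trans e') (by decide)
  -- σ 1
  all_goals rw [e0] at p01 p02 c01 c02 q01a q01b q02a q02b
  all_goals
    rcases p01 with f|f|f|f|f|f|f|f|f|f|f|f|f|f <;>
      first | (rw [f] at c01; exact absurd c01 (by decide)) | skip
  all_goals rw [f] at q01a q01b
  all_goals first | exact absurd q01a (by decide) | skip
  all_goals simp only [Finset.mem_insert, Finset.mem_singleton] at q01b
  all_goals
    rcases q01b with e1|e1 <;>
      first | exact absurd (e1.trans e0.symm) (hne 1 0 (by decide)) | skip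
  -- σ 2
  all_goals
    rcases p02 with g|g|g|g|g|g|g|g|g|g|g|g|g|g <;>
      first | (rw [g] at c02; exact absurd c02 (by decide)) | skip
  all_goals rw [g] at q02a q02b
  all_goals first | exact absurd q02a (by decide) | skip
  all_goals simp only [Finset.mem_insert, Finset.mem_singleton] at q02b
  all_goals
    rcases q02b with e2|e2 <;>
      first
        | exact absurd (e2.trans e0.symm) (hne 2 0 (by decide))
        | exact absurd (e1.trans e2.symm) (hne 1 2 (by decide))
        | skip
  -- σ 3
  all_goals
    rcases m3A with e3|e3|e3|e3 <;>
      first | exact absurd (e3.trans e0.symm) (hne 3 0 (by decide)) | skip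
  -- σ 4
  all_goals
    rcases m4A with e4|e4|e4|e4 <;>
      first
        | exact absurd (e4.trans e0.symm) (hne 4 0 (by decide))
        | exact absurd (e4.trans e3.symm) (hne 4 3 (by decide))
        | skip
  -- σ 5
  all_goals
    rcases m5A with e5|e5|e5|e5 <;>
      first
        | exact absurd (e5.trans e0.symm) (hne 5 0 (by decide))
        | exact absurd (e5.trans e3.symm) (hne 5 3 (by decide))
        | exact absurd (e5.trans e4.symm) (hne 5 4 (by decide))
        | skip
  -- σ 7
  all_goals rw [e3] at p37 c37 q37a q37b
  all_goals
    rcases p37 with f7|f7|f7|f7|f7|f7|f7|f7|f7|f7|f7|f7|f7|f7 <;>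
      first | (rw [f7] at c37; exact absurd c37 (by decide)) | skip
  all_goals rw [f7] at q37a q37b
  all_goals first | exact absurd q37a (by decide) | skip
  all_goals simp only [Finset.mem_insert, Finset.mem_singleton] at q37b
  all_goals
    rcases q37b with e7|e7 <;>
      first | exact absurd (e7.trans e3.symm) (hne 7 3 (by decide)) | skip
  -- σ 6
  all_goals rw [e4] at p46 c46 q46a q46b
  all_goals
    rcases p46 with f6|f6|f6|f6|f6|f6|f6|f6|f6|f6|f6|f6|f6|f6 <;>
      first | (rw [f6] at c46; exact absurd c46 (by decide)) | skip
  all_goals rw [f6] at q46a q46b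
  all_goals first | exact absurd q46a (by decide) | skip
  all_goals simp only [Finset.mem_insert, Finset.mem_singleton] at q46b
  all_goals
    rcases q46b with e6|e6 <;>
      first | exact absurd (e6.trans e4.symm) (hne 6 4 (by decide)) | skip
  -- σ 8
  all_goals rw [e5] at p58 c58 q58a q58b
  all_goals
    rcases p58 with f8|f8|f8|f8|f8|f8|f8|f8|f8|f8|f8|f8|f8|f8 <;>
      first | (rw [f8] at c58; exact absurd c58 (by decide)) | skip
  all_goals rw [f8] at q58a q58b
  all_goals first | exact absurd q58a (by decide) | skip
  all_goals simp only [Finset.mem_insert, Finset.mem_singleton] at q58b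
  all_goals
    rcases q58b with e8|e8 <;>
      first | exact absurd (e8.trans e5.symm) (hne 8 5 (by decide)) | skip
  -- final
  all_goals rw [e1, e3, e8] at p138
  all_goals
    first
      | exact absurd p138 (by decide)
      | exact ⟨DihedralGroup.r 0, (perm_eq_of_values σ (fdih (DihedralGroup.r 0)) (by simp only [e0,e1,e2,e3,e4,e5,e6,e7,e8]; decide)).symm⟩
      | exact ⟨DihedralGroup.r 1, (perm_eq_of_values σ (fdih (DihedralGroup.r 1)) (by simp only [e0,e1,e2,e3,e4,e5,e6,e7,e8]; decide)).symm⟩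
      | exact ⟨DihedralGroup.r 2, (perm_eq_of_values σ (fdih (DihedralGroup.r 2)) (by simp only [e0,e1,e2,e3,e4,e5,e6,e7,e8]; decide)).symm⟩
      | exact ⟨DihedralGroup.r 3, (perm_eq_of_values σ (fdih (DihedralGroup.r 3)) (by simp only [e0,e1,e2,e3,e4,e5,e6,e7,e8]; decide)).symm⟩
      | exact ⟨DihedralGroup.r 4, (perm_eq_of_values σ (fdih (DihedralGroup.r 4)) (by simp only [e0,e1,e2,e3,e4,e5,e6,e7,e8]; decide)).symm⟩
      | exact ⟨DihedralGroup.r 5, (perm_eq_of_values σ (fdih (DihedralGroup.r 5)) (by simp only [e0,e1,e2,e3,e4,e5,e6,e7,e8]; decide)).symm⟩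
      | exact ⟨DihedralGroup.sr 0, (perm_eq_of_values σ (fdih (DihedralGroup.sr 0)) (by simp only [e0,e1,e2,e3,e4,e5,e6,e7,e8]; decide)).symm⟩
      | exact ⟨DihedralGroup.sr 1, (perm_eq_of_values σ (fdih (DihedralGroup.sr 1)) (by simp only [e0,e1,e2,e3,e4,e5,e6,e7,e8]; decide)).symm⟩
      | exact ⟨DihedralGroup.sr 2, (perm_eq_of_values σ (fdih (DihedralGroup.sr 2)) (by simp only [e0,e1,e2,e3,e4,e5,e6,e7,e8]; decide)).symm⟩
      | exact ⟨DihedralGroup.sr 3, (perm_eq_of_values σ (fdih (DihedralGroup.sr 3)) (by simp only [e0,e1,e2,e3,e4,e5,e6,e7,e8]; decide)).symm⟩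
      | exact ⟨DihedralGroup.sr 4, (perm_eq_of_values σ (fdih (DihedralGroup.sr 4)) (by simp only [e0,e1,e2,e3,e4,e5,e6,e7,e8]; decide)).symm⟩
      | exact ⟨DihedralGroup.sr 5, (perm_eq_of_values σ (fdih (DihedralGroup.sr 5)) (by simp only [e0,e1,e2,e3,e4,e5,e6,e7,e8]; decide)).symm⟩

def φMac : DihedralGroup 6 →* Equiv.Perm (Fin 9) :=
  { toFun := fdih, map_one' := by decide, map_mul' := by decide }

set_option maxRecDepth 20000 in
lemma φMac_inj : Function.Injective φMac := by
  intro a b h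
  revert h
  revert a b
  decide

set_option maxRecDepth 20000 in
lemma range_sub : ∀ x : DihedralGroup 6, ∀ p ∈ extendedMacLane, p.image (fdih x) ∈ extendedMacLane := by
  decide

lemma mem_aut_iff (σ : Equiv.Perm (Fin 9)) :
    σ ∈ extendedMacLaneAut ↔ ∀ p ∈ extendedMacLane, p.image σ ∈ extendedMacLane := by
  constructor
  · intro hσ p hp; exact (hσ p).mp hp
  · intro hmaps p
    constructor
    · exact hmaps p
    · intro hp
      obtain ⟨q, hq, hqe⟩ :=
        Finset.surj_on_of_inj_on_of_card_le (fun a _ => a.image σ)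
          (fun a ha => hmaps a ha)
          (fun a₁ a₂ _ _ he => Finset.image_injective σ.injective he)
          le_rfl (p.image σ) hp
      rwa [Finset.image_injective σ.injective hqe]

lemma φMac_range : φMac.range = extendedMacLaneAut := by
  apply le_antisymm
  · rintro σ ⟨x, rfl⟩
    rw [mem_aut_iff]
    exact range_sub x
  · intro σ hσ
    obtain ⟨x, hx⟩ := macLane_key σ (fun p hp => (hσ p).mp hp)
    exact ⟨x, hx⟩

def rot : Equiv.Perm (Fin 3) := ⟨![1,2,0], ![2,0,1], by decide, by decide⟩
def refl3 : Equiv.Perm (Fin 3) := ⟨![0,2,1], ![0,2,1], by decide, by decide⟩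

def fchi : DihedralGroup 6 → Equiv.Perm (Fin 3) × Multiplicative (ZMod 2)
  | DihedralGroup.r i => (rot ^ i.val, Multiplicative.ofAdd (i.val : ZMod 2))
  | DihedralGroup.sr i => (refl3 * rot ^ i.val, Multiplicative.ofAdd (i.val : ZMod 2))

def χMac : DihedralGroup 6 →* Equiv.Perm (Fin 3) × Multiplicative (ZMod 2) :=
  { toFun := fchi, map_one' := by decide, map_mul' := by decide }

set_option maxRecDepth 20000 in
lemma χMac_bij : Function.Bijective χMac :=
  ⟨by intro a b; revert a b; decide, by decide⟩

noncomputable def macIso1 : extendedMacLaneAut ≃* DihedralGroup 6 :=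
  (MulEquiv.subgroupCongr φMac_range.symm).trans (MonoidHom.ofInjective φMac_inj).symm

noncomputable def macIso2 :
    extendedMacLaneAut ≃* Equiv.Perm (Fin 3) × Multiplicative (ZMod 2) :=
  macIso1.trans (MulEquiv.ofBijective χMac χMac_bij)

/-- the automorphism group of the extended MacLane combinatorics is
isomorphic to the dihedral group of order 12, equivalently to `Σ₃ × ℤ/2`. -/
theorem extendedMacLaneAut_iso :
    Nonempty (extendedMacLaneAut ≃* DihedralGroup 6) ∧
    Nonempty (extendedMacLaneAut ≃* Equiv.Perm (Fin 3) × Multiplicative (ZMod 2)) := by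
  exact ⟨⟨macIso1⟩, ⟨macIso2⟩⟩
end

section
/- Every automorphism of the extended MacLane combinatorics C_M either fixes both L_2 and L_3 or exchanges L_2 and L_3. -/
/-- every automorphism of the extended MacLane combinatorics either
fixes both `L₂` and `L₃` (encoded `1` and `2`) or exchanges them. -/
theorem extendedMacLane_L2_L3 :
    ∀ σ : Equiv.Perm (Fin 9),
      (∀ p : Finset (Fin 9), p ∈ extendedMacLane ↔ p.image σ ∈ extendedMacLane) →
      (σ 1 = 1 ∧ σ 2 = 2) ∨ (σ 1 = 2 ∧ σ 2 = 1) := by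
  intro σ h
  have hinj := σ.injective
  have c1 : (({0,3,4,5} : Finset (Fin 9)).image σ).card = 4 := by
    rw [Finset.card_image_of_injective _ hinj]; decide
  have c2 : (({0,6,7,8} : Finset (Fin 9)).image σ).card = 4 := by
    rw [Finset.card_image_of_injective _ hinj]; decide
  have h1 : ({0,3,4,5} : Finset (Fin 9)).image σ ∈ extendedMacLane :=
    (h _).mp (by decide)
  have h2 : ({0,6,7,8} : Finset (Fin 9)).image σ ∈ extendedMacLane :=
    (h _).mp (by decide)
  simp only [extendedMacLane, Finset.mem_insert, Finset.mem_singleton] at h1 h2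
  have hne : ({0,3,4,5} : Finset (Fin 9)).image σ ≠ ({0,6,7,8} : Finset (Fin 9)).image σ := by
    intro he
    exact absurd (Finset.image_injective hinj he) (by decide)
  have m1 : σ 0 ∈ ({0,3,4,5} : Finset (Fin 9)).image σ :=
    Finset.mem_image_of_mem σ (by decide)
  have m2 : σ 0 ∈ ({0,6,7,8} : Finset (Fin 9)).image σ :=
    Finset.mem_image_of_mem σ (by decide)
  have h0 : σ 0 = 0 := by
    rcases h1 with e|e|e|e|e|e|e|e|e|e|e|e|e|e <;>
    rcases h2 with f|f|f|f|f|f|f|f|f|f|f|f|f|f <;>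
      first
        | (rw [e] at c1; exact absurd c1 (by decide))
        | (rw [f] at c2; exact absurd c2 (by decide))
        | (exact absurd (e.trans f.symm) hne)
        | (rw [e] at m1; rw [f] at m2;
           have := Finset.mem_inter.mpr ⟨m1, m2⟩
           simp only [show ({0,3,4,5} : Finset (Fin 9)) ∩ {0,6,7,8} = {0} from by decide,
             Finset.mem_singleton] at this
           exact this)
        | (rw [e] at m1; rw [f] at m2;
           have := Finset.mem_inter.mpr ⟨m2, m1⟩
           simp only [show ({0,3,4,5} : Finset (Fin 9)) ∩ {0,6,7,8} = {0} from by decide,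
             Finset.mem_singleton] at this
           exact this)
  -- now handle σ 1 and σ 2
  have key : ∀ x : Fin 9, x ∈ ({1,2} : Finset (Fin 9)) → σ x = 1 ∨ σ x = 2 := by
    intro x hx
    have hmem : ({0,x} : Finset (Fin 9)) ∈ extendedMacLane := by
      fin_cases hx <;> decide
    have hc : (({0,x} : Finset (Fin 9)).image σ).card = 2 := by
      rw [Finset.card_image_of_injective _ hinj]
      rw [Finset.card_insert_of_notMem (by
        simp only [Finset.mem_singleton]
        fin_cases hx <;> decide), Finset.card_singleton]
    have him : ({0,x} : Finset (Fin 9)).image σ ∈ extendedMacLane := (h _).mp hmem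
    have m0 : (0 : Fin 9) ∈ ({0,x} : Finset (Fin 9)).image σ := by
      have := Finset.mem_image_of_mem σ (Finset.mem_insert_self (0 : Fin 9) {x})
      rwa [h0] at this
    have mx : σ x ∈ ({0,x} : Finset (Fin 9)).image σ :=
      Finset.mem_image_of_mem σ (by simp)
    have hx0 : σ x ≠ 0 := by
      intro hc0
      have : x = 0 := hinj (hc0.trans h0.symm)
      rw [this] at hx; exact absurd hx (by decide)
    simp only [extendedMacLane, Finset.mem_insert, Finset.mem_singleton] at him
    rcases him with e|e|e|e|e|e|e|e|e|e|e|e|e|e <;>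
      first
        | (rw [e] at hc; exact absurd hc (by decide))
        | (rw [e] at m0; exact absurd m0 (by decide))
        | (rw [e] at mx;
           simp only [Finset.mem_insert, Finset.mem_singleton] at mx
           rcases mx with hx1 | hx1
           · exact absurd hx1 hx0
           · simp [hx1])
  have k1 := key 1 (by decide)
  have k2 := key 2 (by decide)
  have h12 : σ 1 ≠ σ 2 := fun he => absurd (hinj he) (by decide)
  rcases k1 with e1 | e1 <;> rcases k2 with e2 | e2
  · exact absurd (e1.trans e2.symm) h12
  · exact Or.inl ⟨e1, e2⟩
  · exact Or.inr ⟨e1, e2⟩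
  · exact absurd (e1.trans e2.symm) h12
end

section
/- Let ζ be a primitive cube root of unity in ℂ and define ξ_M : {L_1,…,L_9} → ℂ* by ξ_M(L_1)=ξ_M(L_2)=ξ_M(L_3)=1, ξ_M(L_4)=ξ_M(L_5)=ξ_M(L_6)=ζ, ξ_M(L_7)=ξ_M(L_8)=ξ_M(L_9)=ζ². Then ξ_M is a character on the extended MacLane combinatorics C_M (i.e. ∏_{i=1}^{9} ξ_M(L_i) = 1), and ξ_M is inner-cyclic for the cycle γ in the incidence graph supported by L_1, L_2, L_3: for every vertex v of the incidence graph at distance ≤ 1 from γ, the extension ξ_M* takes value 1 at v. -/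
/-- the character `ξ_M = (1,1,1,ζ,ζ,ζ,ζ²,ζ²,ζ²)` has total product 1
and is inner-cyclic for the triangular cycle `γ` supported by `L₁, L₂, L₃`
(line-vertices `{0,1,2}`, point-vertices `{{0,1},{1,2},{0,2}}`): the extension
`ξ_M*` takes value 1 on every vertex of the incidence graph at distance ≤ 1
from `γ`. -/
theorem extendedMacLane_character_inner_cyclic
    (ζ : ℂ) (hζ : IsPrimitiveRoot ζ 3)
    (ξ : Fin 9 → ℂ)
    (hξ : ξ = ![1, 1, 1, ζ, ζ, ζ, ζ^2, ζ^2, ζ^2]) :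
    (∏ i, ξ i = 1) ∧
    (∀ i : Fin 9,
      (i ∈ ({0,1,2} : Finset (Fin 9)) ∨
        ∃ p ∈ ({{0,1},{1,2},{0,2}} : Finset (Finset (Fin 9))), i ∈ p) →
      ξ i = 1) ∧
    (∀ p ∈ extendedMacLane,
      (p ∈ ({{0,1},{1,2},{0,2}} : Finset (Finset (Fin 9))) ∨
        ∃ i ∈ ({0,1,2} : Finset (Fin 9)), i ∈ p) →
      ∏ j ∈ p, ξ j = 1) := by
  have h3 : ζ^3 = 1 := hζ.pow_eq_one
  subst hξ
  have e5 : ![1, 1, 1, ζ, ζ, ζ, ζ^2, ζ^2, ζ^2] 5 = ζ := rfl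
  have e6 : ![1, 1, 1, ζ, ζ, ζ, ζ^2, ζ^2, ζ^2] 6 = ζ^2 := rfl
  have e7 : ![1, 1, 1, ζ, ζ, ζ, ζ^2, ζ^2, ζ^2] 7 = ζ^2 := rfl
  have e8 : ![1, 1, 1, ζ, ζ, ζ, ζ^2, ζ^2, ζ^2] 8 = ζ^2 := rfl
  refine ⟨?_, ?_, ?_⟩
  · simp [Fin.prod_univ_succ]
    linear_combination (ζ^6 + ζ^3 + 1) * h3
  · intro i hi
    fin_cases i <;> simp_all
  · intro p hp _
    simp only [extendedMacLane, Finset.mem_insert, Finset.mem_singleton] at hp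
    rcases hp with rfl|rfl|rfl|rfl|rfl|rfl|rfl|rfl|rfl|rfl|rfl|rfl|rfl|rfl <;>
      simp [Finset.prod_insert, e5, e6, e7, e8] <;>
      first | linear_combination h3 | linear_combination (ζ^3 + 1) * h3
end

section
/- Let (A, ξ, γ) and (A', ξ', γ') be two triangular inner-cyclic arrangements and φ a gluing of A and A' along the triangle L_1, L_2, L_3. Then the glued character X_φ = ξ ⋈_φ ξ' on the glued arrangement A ⋈_φ A' is inner-cyclic for the cycle μ supported by D_1, D_2, D_3; in particular: (1) X_φ(𝔪_i) = 1 for i = 1,2,3; (2) X_φ(𝔪_q) = 1 for every line D_q passing through D_i ∩ D_j with i ≠ j ∈ {1,2,3}; (3) for every singular point P on D_1, D_2 or D_3, the product of X_φ(𝔪) over all lines of A ⋈_φ A' through P equals 1. -/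
/-- Proposition on inner-cyclic gluing: lines are indexed by
naturals; `A` has lines `0,…,n-1`, `A'` has lines `0,…,k-1`, and the gluing
identifies line `i` of `A'` with line `i` of `A` for `i < l` (`3 ≤ l`).  In the
glued arrangement the lines are `0,…,n+k-l-1`, where `i ≥ n` corresponds to line
`i - n + l` of `A'`.  Singular points are recorded as the finite sets of lines
through them (`PtsA`, `PtsA'`, `PtsG`).  If `(A, ξ, γ)` and `(A', ξ', γ')` are
triangular inner-cyclic (cycles supported by the first three lines) and the
glued character `X` is defined by `X i = ξ i · ξ' i` for `i < l`, `X i = ξ i`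
for `l ≤ i < n`, `X i = ξ'(i - n + l)` for `i ≥ n`, then `(𝔄_φ, X_φ, μ)` is
triangular inner-cyclic: (1) `X` equals 1 on the three triangle lines; (2) `X`
equals 1 on every line through a pairwise intersection of the triangle lines;
(3) the product of `X` over the lines through any singular point on a triangle
line equals 1. -/
theorem glued_character_inner_cyclic
    (n k l : ℕ) (hl3 : 3 ≤ l) (hln : l ≤ n) (hlk : l ≤ k)
    (PtsA PtsA' PtsG : Finset (Finset ℕ))
    (hPA : ∀ P ∈ PtsA, ∀ q ∈ P, q < n)
    (hPA' : ∀ P ∈ PtsA', ∀ q ∈ P, q < k)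
    (hPG : ∀ P ∈ PtsG, ∀ q ∈ P, q < n + k - l)
    (ξ ξ' X : ℕ → ℂ)
    -- (A, ξ, γ) is triangular inner-cyclic:
    (hA1 : ∀ i < 3, ξ i = 1)
    (hA2 : ∀ P ∈ PtsA,
      (∃ i, i < 3 ∧ ∃ j, j < 3 ∧ i ≠ j ∧ i ∈ P ∧ j ∈ P) → ∀ q ∈ P, ξ q = 1)
    (hA3 : ∀ P ∈ PtsA, (∃ i, i < 3 ∧ i ∈ P) → ∏ q ∈ P, ξ q = 1)
    -- (A', ξ', γ') is triangular inner-cyclic: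
    (hA'1 : ∀ i < 3, ξ' i = 1)
    (hA'2 : ∀ P ∈ PtsA',
      (∃ i, i < 3 ∧ ∃ j, j < 3 ∧ i ≠ j ∧ i ∈ P ∧ j ∈ P) → ∀ q ∈ P, ξ' q = 1)
    (hA'3 : ∀ P ∈ PtsA', (∃ i, i < 3 ∧ i ∈ P) → ∏ q ∈ P, ξ' q = 1)
    -- the glued character:
    (hX1 : ∀ i < l, X i = ξ i * ξ' i)
    (hX2 : ∀ i, l ≤ i → i < n → X i = ξ i)
    (hX3 : ∀ i, n ≤ i → i < n + k - l → X i = ξ' (i - n + l))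
    -- compatibility of the glued singular points on the triangle with those of
    -- A and A': the lines of A (resp. A') through such a glued point form a
    -- singular point of A (resp. A'), unless at most one such line exists:
    (hglue : ∀ P ∈ PtsG, (∃ i, i < 3 ∧ i ∈ P) →
      ((P.filter (· < n) ∈ PtsA ∨ (P.filter (· < n)).card ≤ 1) ∧
        (((P.filter (fun q => q < l ∨ n ≤ q)).image
            (fun q => if q < l then q else q - n + l)) ∈ PtsA' ∨
          ((P.filter (fun q => q < l ∨ n ≤ q)).image
            (fun q => if q < l then q else q - n + l)).card ≤ 1))) :
    (∀ i < 3, X i = 1) ∧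
    (∀ P ∈ PtsG,
      (∃ i, i < 3 ∧ ∃ j, j < 3 ∧ i ≠ j ∧ i ∈ P ∧ j ∈ P) → ∀ q ∈ P, X q = 1) ∧
    (∀ P ∈ PtsG, (∃ i, i < 3 ∧ i ∈ P) → ∏ q ∈ P, X q = 1) := by
  classical
  set f : ℕ → ℕ := fun q => if q < l then q else q - n + l with hf
  -- generic facts for a glued point P
  have hinj : ∀ P : Finset ℕ, Set.InjOn f ↑(P.filter (fun q => q < l ∨ n ≤ q)) := by
    intro P a ha b hb hab
    simp only [Finset.coe_filter, Set.mem_setOf_eq] at ha hb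
    simp only [hf] at hab
    split_ifs at hab <;> omega
  have key : ∀ P ∈ PtsG, ∏ q ∈ P, X q =
      (∏ q ∈ P.filter (· < n), ξ q) *
      (∏ q ∈ (P.filter (fun q => q < l ∨ n ≤ q)).image f, ξ' q) := by
    intro P hP
    rw [Finset.prod_image (fun a ha b hb hab => hinj P ha hb hab)]
    rw [Finset.prod_filter, Finset.prod_filter, ← Finset.prod_mul_distrib]
    apply Finset.prod_congr rfl
    intro q hq
    have hq' := hPG P hP q hq
    by_cases h1 : q < l
    · rw [if_pos (by omega : q < n), if_pos (Or.inl h1), hX1 q h1, hf]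
      simp [h1]
    · by_cases h2 : q < n
      · rw [if_pos h2, if_neg (by omega), hX2 q (by omega) h2, mul_one]
      · rw [if_neg h2, if_pos (Or.inr (by omega)), hX3 q (by omega) hq', hf, one_mul]
        simp [h1]
  refine ⟨fun i hi => by
    rw [hX1 i (by omega), hA1 i hi, hA'1 i hi, one_mul], ?_, ?_⟩
  · rintro P hP ⟨i, hi3, j, hj3, hij, hiP, hjP⟩ q hqP
    have hq' := hPG P hP q hqP
    obtain ⟨hg1, hg2⟩ := hglue P hP ⟨i, hi3, hiP⟩
    have hiFA : i ∈ P.filter (· < n) := Finset.mem_filter.2 ⟨hiP, by omega⟩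
    have hjFA : j ∈ P.filter (· < n) := Finset.mem_filter.2 ⟨hjP, by omega⟩
    have hiFI : i ∈ (P.filter (fun q => q < l ∨ n ≤ q)).image f :=
      Finset.mem_image.2 ⟨i, Finset.mem_filter.2 ⟨hiP, Or.inl (by omega)⟩,
        by simp [hf, show i < l by omega]⟩
    have hjFI : j ∈ (P.filter (fun q => q < l ∨ n ≤ q)).image f :=
      Finset.mem_image.2 ⟨j, Finset.mem_filter.2 ⟨hjP, Or.inl (by omega)⟩,
        by simp [hf, show j < l by omega]⟩
    have hFA : P.filter (· < n) ∈ PtsA := by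
      rcases hg1 with h | h
      · exact h
      · exact absurd (Finset.one_lt_card.2 ⟨i, hiFA, j, hjFA, hij⟩) (by omega)
    have hFI : (P.filter (fun q => q < l ∨ n ≤ q)).image f ∈ PtsA' := by
      rcases hg2 with h | h
      · exact h
      · exact absurd (Finset.one_lt_card.2 ⟨i, hiFI, j, hjFI, hij⟩) (by omega)
    have hξFA := hA2 _ hFA ⟨i, hi3, j, hj3, hij, hiFA, hjFA⟩
    have hξFI := hA'2 _ hFI ⟨i, hi3, j, hj3, hij, hiFI, hjFI⟩
    by_cases h1 : q < l
    · rw [hX1 q h1, hξFA q (Finset.mem_filter.2 ⟨hqP, by omega⟩),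
        hξFI q (Finset.mem_image.2 ⟨q, Finset.mem_filter.2 ⟨hqP, Or.inl h1⟩,
          by simp [hf, h1]⟩), one_mul]
    · by_cases h2 : q < n
      · rw [hX2 q (by omega) h2]
        exact hξFA q (Finset.mem_filter.2 ⟨hqP, h2⟩)
      · rw [hX3 q (by omega) hq']
        exact hξFI _ (Finset.mem_image.2 ⟨q, Finset.mem_filter.2 ⟨hqP, Or.inr (by omega)⟩,
          by simp [hf, h1]⟩)
  · rintro P hP ⟨i, hi3, hiP⟩
    obtain ⟨hg1, hg2⟩ := hglue P hP ⟨i, hi3, hiP⟩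
    have hiFA : i ∈ P.filter (· < n) := Finset.mem_filter.2 ⟨hiP, by omega⟩
    have hiFI : i ∈ (P.filter (fun q => q < l ∨ n ≤ q)).image f :=
      Finset.mem_image.2 ⟨i, Finset.mem_filter.2 ⟨hiP, Or.inl (by omega)⟩,
        by simp [hf, show i < l by omega]⟩
    have hpFA : ∏ q ∈ P.filter (· < n), ξ q = 1 := by
      rcases hg1 with h | h
      · exact hA3 _ h ⟨i, hi3, hiFA⟩
      · have : P.filter (· < n) = {i} :=
          Finset.eq_singleton_iff_unique_mem.2 ⟨hiFA, fun b hb => by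
            by_contra hne
            exact absurd (Finset.one_lt_card.2 ⟨b, hb, i, hiFA, hne⟩) (by omega)⟩
        rw [this, Finset.prod_singleton, hA1 i hi3]
    have hpFI : ∏ q ∈ (P.filter (fun q => q < l ∨ n ≤ q)).image f, ξ' q = 1 := by
      rcases hg2 with h | h
      · exact hA'3 _ h ⟨i, hi3, hiFI⟩
      · have : (P.filter (fun q => q < l ∨ n ≤ q)).image f = {i} :=
          Finset.eq_singleton_iff_unique_mem.2 ⟨hiFI, fun b hb => by
            by_contra hne
            exact absurd (Finset.one_lt_card.2 ⟨b, hb, i, hiFI, hne⟩) (by omega)⟩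
        rw [this, Finset.prod_singleton, hA'1 i hi3]
    rw [key P hP, hpFA, hpFI, one_mul]
end

section
/- The set of matrices in GL_3(𝔽_3) of the two forms ((±1,0,0),(a,±1,0),(b,0,±1)) and ((±1,0,0),(a,0,±1),(b,±1,0)), with a, b ∈ 𝔽_3 and independent sign choices, is a subgroup of GL_3(𝔽_3) isomorphic to ((Σ_3 × Σ_3) ⋊ ℤ/2) × ℤ/2, of order 144. -/
set_option maxRecDepth 100000

open Equiv Matrix

namespace Ryb16

abbrev S3 := Equiv.Perm (Fin 3)
abbrev Z2 := Multiplicative (ZMod 2)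

def ps (σ : S3) : ZMod 3 := ((σ 1 : Fin 3) : ZMod 3) - ((σ 0 : Fin 3) : ZMod 3)
def pt (σ : S3) : ZMod 3 := ((σ 0 : Fin 3) : ZMod 3)

lemma ps_mul : ∀ σ τ : S3, ps (σ * τ) = ps σ * ps τ := by decide
lemma pt_mul : ∀ σ τ : S3, pt (σ * τ) = ps σ * pt τ + pt σ := by decide
lemma ps_pm : ∀ σ : S3, ps σ = 1 ∨ ps σ = -1 := by decide

def sg (δ : Z2) : ZMod 3 := if δ.toAdd = 0 then 1 else -1

lemma sg_mul : ∀ δ δ' : Z2, sg (δ * δ') = sg δ * sg δ' := by decide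
lemma sg_pm : ∀ δ : Z2, sg δ = 1 ∨ sg δ = -1 := by decide

def swapAut : MulAut (S3 × S3) := MulEquiv.prodComm

lemma z2cases : ∀ z : ZMod 2, z = 0 ∨ z = 1 := by decide

def phi : Z2 →* MulAut (S3 × S3) where
  toFun x := if x.toAdd = 0 then 1 else swapAut
  map_one' := rfl
  map_mul' x y := by
    have hswap : swapAut * swapAut = 1 := by ext p <;> rfl
    have key : (x * y).toAdd = x.toAdd + y.toAdd := rfl
    show (if (x*y).toAdd = 0 then (1 : MulAut (S3 × S3)) else swapAut)
      = (if x.toAdd = 0 then 1 else swapAut) * (if y.toAdd = 0 then 1 else swapAut)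
    rcases z2cases x.toAdd with hx | hx <;> rcases z2cases y.toAdd with hy | hy <;>
      rw [key, hx, hy] <;>
      simp only [show ((0:ZMod 2)+0 = 0) from rfl,
        show ((0:ZMod 2)+1 = 1) from rfl, show ((1:ZMod 2)+0 = 1) by decide,
        show ((1:ZMod 2)+1 = 0) by decide,
        show (((0:ZMod 2) = 0) = True) by simp, show (((1:ZMod 2) = 0) = False) by decide,
        if_true, if_false, hswap, one_mul, mul_one]

abbrev K := ((S3 × S3) ⋊[phi] Z2) × Z2

def fmat : K → Matrix (Fin 3) (Fin 3) (ZMod 3) := fun k =>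
  let σ := k.1.left.1
  let τ := k.1.left.2
  let g := sg k.2
  if k.1.right.toAdd = 0 then
    !![g, 0, 0; g * pt σ, g * ps σ, 0; g * pt τ, 0, g * ps τ]
  else
    !![g, 0, 0; g * pt σ, 0, g * ps σ; g * pt τ, g * ps τ, 0]

lemma phi_apply (ε : Z2) (p : S3 × S3) :
    phi ε p = if ε.toAdd = 0 then p else p.swap := by
  show (if ε.toAdd = 0 then (1 : MulAut (S3 × S3)) else swapAut) p = _
  rcases z2cases ε.toAdd with h | h <;> rw [h] <;> rfl

def f : K →* Matrix (Fin 3) (Fin 3) (ZMod 3) where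
  toFun := fmat
  map_one' := by decide
  map_mul' k k' := by
    obtain ⟨⟨⟨σ, τ⟩, ε⟩, δ⟩ := k
    obtain ⟨⟨⟨σ', τ'⟩, ε'⟩, δ'⟩ := k'
    have key : ∀ a b : Z2, (a * b).toAdd = a.toAdd + b.toAdd := fun _ _ => rfl
    show fmat ⟨⟨(σ, τ) * phi ε (σ', τ'), ε * ε'⟩, δ * δ'⟩ = _
    rcases z2cases ε.toAdd with hε | hε <;> rcases z2cases ε'.toAdd with hε' | hε' <;>
      simp only [fmat, phi_apply, key, hε, hε', Prod.swap, Prod.mk_mul_mk, sg_mul,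
        show ((0:ZMod 2)+0 = 0) from rfl, show ((0:ZMod 2)+1 = 1) from rfl,
        show ((1:ZMod 2)+0 = 1) by decide, show ((1:ZMod 2)+1 = 0) by decide,
        show (((0:ZMod 2) = 0) = True) by simp, show (((1:ZMod 2) = 0) = False) by decide,
        if_true, if_false] <;>
      simp only [Matrix.mul_fin_three, ps_mul, pt_mul] <;>
      congr 1 <;> ring

instance : Fintype ((S3 × S3) ⋊[phi] Z2) :=
  Fintype.ofEquiv ((S3 × S3) × Z2)
    { toFun := fun p => ⟨p.1, p.2⟩
      invFun := fun x => (x.left, x.right)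
      left_inv := fun p => rfl
      right_inv := fun x => rfl }


lemma sg_inj : ∀ δ δ' : Z2, sg δ = sg δ' → δ = δ' := by decide
lemma st_inj : ∀ σ σ' : S3, ps σ = ps σ' → pt σ = pt σ' → σ = σ' := by decide
lemma sg_ne : ∀ δ : Z2, sg δ ≠ 0 := by decide
lemma sgps_ne : ∀ (δ : Z2) (σ : S3), sg δ * ps σ ≠ 0 := by decide
lemma pm_mul : ∀ x y : ZMod 3, (x = 1 ∨ x = -1) → (y = 1 ∨ y = -1) →
    (x*y = 1 ∨ x*y = -1) := by decide
lemma pm_sq : ∀ x : ZMod 3, (x = 1 ∨ x = -1) → x * x = 1 := by decide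
lemma exists_perm : ∀ s t : ZMod 3, (s = 1 ∨ s = -1) → ∃ σ : S3, ps σ = s ∧ pt σ = t := by
  decide
lemma exists_sg : ∀ e : ZMod 3, (e = 1 ∨ e = -1) → ∃ δ : Z2, sg δ = e := by decide

lemma fmat_inj : Function.Injective fmat := by
  rintro ⟨⟨⟨σ, τ⟩, ε⟩, δ⟩ ⟨⟨⟨σ', τ'⟩, ε'⟩, δ'⟩ h
  simp only [fmat] at h
  have ent : ∀ i j : Fin 3, _ = _ := fun i j => congrFun (congrFun h i) j
  rcases z2cases ε.toAdd with hε | hε <;> rcases z2cases ε'.toAdd with hε' | hε' <;>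
    rw [hε, hε'] at ent <;>
    simp only [show (((0:ZMod 2) = 0) = True) by simp,
      show (((1:ZMod 2) = 0) = False) by decide, if_true, if_false] at ent
  · -- both diagonal type
    have h00 := ent 0 0; have h10 := ent 1 0; have h11 := ent 1 1
    have h20 := ent 2 0; have h22 := ent 2 2
    simp only [Matrix.cons_val', Matrix.cons_val_zero, Matrix.cons_val_one,
      Matrix.head_cons, Matrix.empty_val', Matrix.cons_val_fin_one, Matrix.head_fin_const,
      Matrix.of_apply, Matrix.cons_val_two, Matrix.tail_cons] at h00 h10 h11 h20 h22
    have hδ : δ = δ' := sg_inj _ _ h00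
    subst hδ
    have hσ : σ = σ' := st_inj _ _
      (mul_left_cancel₀ (sg_ne δ) h11) (mul_left_cancel₀ (sg_ne δ) h10)
    have hτ : τ = τ' := st_inj _ _
      (mul_left_cancel₀ (sg_ne δ) h22) (mul_left_cancel₀ (sg_ne δ) h20)
    have hεε : ε = ε' := show Multiplicative.ofAdd ε.toAdd = Multiplicative.ofAdd ε'.toAdd
      from by rw [hε, hε']
    subst hσ; subst hτ; subst hεε; rfl
  · -- mixed: contradiction
    have h11 := ent 1 1
    simp only [Matrix.cons_val', Matrix.cons_val_zero, Matrix.cons_val_one,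
      Matrix.head_cons, Matrix.empty_val', Matrix.cons_val_fin_one, Matrix.head_fin_const,
      Matrix.of_apply] at h11
    exact absurd h11 (sgps_ne δ σ)
  · have h11 := ent 1 1
    simp only [Matrix.cons_val', Matrix.cons_val_zero, Matrix.cons_val_one,
      Matrix.head_cons, Matrix.empty_val', Matrix.cons_val_fin_one, Matrix.head_fin_const,
      Matrix.of_apply] at h11
    exact absurd h11.symm (sgps_ne δ' σ')
  · -- both antidiagonal type
    have h00 := ent 0 0; have h10 := ent 1 0; have h12 := ent 1 2
    have h20 := ent 2 0; have h21 := ent 2 1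
    simp only [Matrix.cons_val', Matrix.cons_val_zero, Matrix.cons_val_one,
      Matrix.head_cons, Matrix.empty_val', Matrix.cons_val_fin_one, Matrix.head_fin_const,
      Matrix.of_apply, Matrix.cons_val_two, Matrix.tail_cons] at h00 h10 h12 h20 h21
    have hδ : δ = δ' := sg_inj _ _ h00
    subst hδ
    have hσ : σ = σ' := st_inj _ _
      (mul_left_cancel₀ (sg_ne δ) h12) (mul_left_cancel₀ (sg_ne δ) h10)
    have hτ : τ = τ' := st_inj _ _
      (mul_left_cancel₀ (sg_ne δ) h21) (mul_left_cancel₀ (sg_ne δ) h20)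
    have hεε : ε = ε' := show Multiplicative.ofAdd ε.toAdd = Multiplicative.ofAdd ε'.toAdd
      from by rw [hε, hε']
    subst hσ; subst hτ; subst hεε; rfl

def F : K →* GL (Fin 3) (ZMod 3) := f.toHomUnits

lemma coe_F (k : K) : ((F k : GL (Fin 3) (ZMod 3)) : Matrix (Fin 3) (Fin 3) (ZMod 3)) = fmat k :=
  f.coe_toHomUnits k

lemma F_inj : Function.Injective F := by
  intro a b h
  have h2 : (↑(F a) : Matrix (Fin 3) (Fin 3) (ZMod 3)) = ↑(F b) := congrArg Units.val h
  rw [coe_F, coe_F] at h2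
  exact fmat_inj h2

lemma card_K : Nat.card K = 144 := by
  rw [Nat.card_eq_fintype_card]
  decide

end Ryb16

open Ryb16 in
/-- the matrices of `GL₃(𝔽₃)` of the two forms
`((±1,0,0),(a,±1,0),(b,0,±1))` and `((±1,0,0),(a,0,±1),(b,±1,0))`, with
`a, b ∈ 𝔽₃` and independent sign choices, form (the carrier of) a subgroup of
`GL₃(𝔽₃)` of order 144, isomorphic to `((Σ₃ × Σ₃) ⋊ ℤ/2) × ℤ/2`, where `ℤ/2`
acts on `Σ₃ × Σ₃` by swapping the two factors. -/
theorem rybnikov_aut_matrices :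
    ∃ φ : Multiplicative (ZMod 2) →*
        MulAut (Equiv.Perm (Fin 3) × Equiv.Perm (Fin 3)),
      φ (Multiplicative.ofAdd 1) =
        (MulEquiv.prodComm :
          Equiv.Perm (Fin 3) × Equiv.Perm (Fin 3) ≃*
            Equiv.Perm (Fin 3) × Equiv.Perm (Fin 3)) ∧
      ∃ H : Subgroup (GL (Fin 3) (ZMod 3)),
        (∀ M : GL (Fin 3) (ZMod 3), M ∈ H ↔
          ∃ e₁ e₂ e₃ a b : ZMod 3,
            (e₁ = 1 ∨ e₁ = -1) ∧ (e₂ = 1 ∨ e₂ = -1) ∧ (e₃ = 1 ∨ e₃ = -1) ∧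
            ((M : Matrix (Fin 3) (Fin 3) (ZMod 3)) = !![e₁, 0, 0; a, e₂, 0; b, 0, e₃] ∨
              (M : Matrix (Fin 3) (Fin 3) (ZMod 3)) = !![e₁, 0, 0; a, 0, e₂; b, e₃, 0])) ∧
        Nat.card H = 144 ∧
        Nonempty (H ≃*
          ((Equiv.Perm (Fin 3) × Equiv.Perm (Fin 3)) ⋊[φ] Multiplicative (ZMod 2)) ×
            Multiplicative (ZMod 2)) := by
  refine ⟨phi, ?_, F.range, ?_, ?_, ?_⟩
  · show (if (Multiplicative.ofAdd (1 : ZMod 2)).toAdd = 0 then (1 : MulAut (S3 × S3))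
      else swapAut) = _
    rw [if_neg (by decide)]; rfl
  · intro M
    constructor
    · rintro ⟨k, rfl⟩
      obtain ⟨⟨⟨σ, τ⟩, ε⟩, δ⟩ := k
      rcases z2cases ε.toAdd with hε | hε
      · refine ⟨sg δ, sg δ * ps σ, sg δ * ps τ, sg δ * pt σ, sg δ * pt τ,
          sg_pm δ, pm_mul _ _ (sg_pm δ) (ps_pm σ), pm_mul _ _ (sg_pm δ) (ps_pm τ), Or.inl ?_⟩
        rw [coe_F]
        simp only [fmat, hε, show (((0:ZMod 2) = 0) = True) by simp, if_true]
      · refine ⟨sg δ, sg δ * ps σ, sg δ * ps τ, sg δ * pt σ, sg δ * pt τ,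
          sg_pm δ, pm_mul _ _ (sg_pm δ) (ps_pm σ), pm_mul _ _ (sg_pm δ) (ps_pm τ), Or.inr ?_⟩
        rw [coe_F]
        simp only [fmat, hε, show (((1:ZMod 2) = 0) = False) by decide, if_false]
    · rintro ⟨e₁, e₂, e₃, a, b, he₁, he₂, he₃, hM | hM⟩
      · obtain ⟨δ, hδ⟩ := exists_sg e₁ he₁
        obtain ⟨σ, hσs, hσt⟩ := exists_perm (e₁ * e₂) (e₁ * a) (pm_mul _ _ he₁ he₂)
        obtain ⟨τ, hτs, hτt⟩ := exists_perm (e₁ * e₃) (e₁ * b) (pm_mul _ _ he₁ he₃)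
        refine ⟨⟨⟨(σ, τ), 1⟩, δ⟩, Units.ext ?_⟩
        rw [coe_F, hM]
        have key : ∀ x : ZMod 3, e₁ * (e₁ * x) = x := fun x => by
          rw [← mul_assoc, pm_sq e₁ he₁, one_mul]
        simp only [fmat]
        rw [if_pos (show ((1:Z2)).toAdd = 0 from rfl)]
        show !![sg δ, 0, 0; sg δ * pt σ, sg δ * ps σ, 0; sg δ * pt τ, 0, sg δ * ps τ] = _
        rw [hδ, hσs, hσt, hτs, hτt, key, key, key, key]
      · obtain ⟨δ, hδ⟩ := exists_sg e₁ he₁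
        obtain ⟨σ, hσs, hσt⟩ := exists_perm (e₁ * e₂) (e₁ * a) (pm_mul _ _ he₁ he₂)
        obtain ⟨τ, hτs, hτt⟩ := exists_perm (e₁ * e₃) (e₁ * b) (pm_mul _ _ he₁ he₃)
        refine ⟨⟨⟨(σ, τ), Multiplicative.ofAdd 1⟩, δ⟩, Units.ext ?_⟩
        rw [coe_F, hM]
        have key : ∀ x : ZMod 3, e₁ * (e₁ * x) = x := fun x => by
          rw [← mul_assoc, pm_sq e₁ he₁, one_mul]
        simp only [fmat]
        rw [if_neg (show ¬(Multiplicative.ofAdd (1:ZMod 2)).toAdd = 0 by decide)]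
        show !![sg δ, 0, 0; sg δ * pt σ, 0, sg δ * ps σ; sg δ * pt τ, sg δ * ps τ, 0] = _
        rw [hδ, hσs, hσt, hτs, hτt, key, key, key, key]
  · rw [← card_K]
    exact (Nat.card_congr (MonoidHom.ofInjective F_inj).toEquiv).symm
  · exact ⟨(MonoidHom.ofInjective F_inj).symm⟩
end

section
/- In the extended Rybnikov combinatorics C_R on fifteen lines D_1,…,D_{15}, the line D_1 is the unique line contained in four members of P_R of cardinality 4; hence every automorphism of C_R fixes D_1. -/
/-- The point set of the extended Rybnikov combinatorics, with lines
`D₁,…,D₁₅` encoded as `0,…,14 : Fin 15`: the extended MacLane points on the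
first copy `D₁,…,D₉`, the points of the second copy on `D₁,D₂,D₃,D₁₀,…,D₁₅`,
and the 36 double points between the two copies. -/
def extendedRybnikov : Finset (Finset (Fin 15)) :=
  ({ {0,1}, {0,2}, {0,3,4,5}, {0,6,7,8}, {1,2}, {1,3,8}, {1,4,7}, {1,5,6},
     {2,3,6}, {2,4,8}, {2,5,7}, {3,7}, {4,6}, {5,8},
     {0,9,10,11}, {0,12,13,14}, {1,9,14}, {1,10,13}, {1,11,12},
     {2,9,12}, {2,10,14}, {2,11,13}, {9,13}, {10,12}, {11,14} } :
    Finset (Finset (Fin 15))) ∪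
  ((Finset.Icc (3 : Fin 15) 8 ×ˢ Finset.Icc (9 : Fin 15) 14).image
    (fun x => {x.1, x.2}))

/-- Auxiliary: the first part of the theorem, by computation. -/
lemma extendedRybnikov_count (i : Fin 15) :
    (extendedRybnikov.filter (fun p => i ∈ p ∧ p.card = 4)).card = 4 ↔ i = 0 := by
  revert i
  set_option maxRecDepth 10000 in decide

set_option maxRecDepth 10000 in
/-- in the extended Rybnikov combinatorics, `D₁` (encoded `0`) is
the unique line contained in four members of `P_R` of cardinality 4; hence
every automorphism of the combinatorics fixes `D₁`. -/
theorem extendedRybnikov_D1_fixed :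
    (∀ i : Fin 15,
      (extendedRybnikov.filter (fun p => i ∈ p ∧ p.card = 4)).card = 4 ↔ i = 0) ∧
    (∀ σ : Equiv.Perm (Fin 15),
      (∀ p : Finset (Fin 15), p ∈ extendedRybnikov ↔ p.image σ ∈ extendedRybnikov) →
      σ 0 = 0) := by
  refine ⟨extendedRybnikov_count, fun σ hσ => ?_⟩
  rw [← extendedRybnikov_count (σ 0)]
  have h0 := (extendedRybnikov_count 0).mpr rfl
  rw [← h0]
  apply Finset.card_bij (fun p _ => p.image σ.symm)
  · intro p hp
    simp only [Finset.mem_filter] at hp ⊢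
    have hpp : (p.image σ.symm).image σ = p := by
      simp [Finset.image_image, Finset.image_id']
    refine ⟨by rw [hσ, hpp]; exact hp.1, ?_, ?_⟩
    · have := Finset.mem_image_of_mem σ.symm hp.2.1
      simpa using this
    · rw [Finset.card_image_of_injective _ σ.symm.injective]; exact hp.2.2
  · intro p hp q hq h
    have := congrArg (Finset.image σ) h
    simpa [Finset.image_image, Finset.image_id'] using this
  · intro q hq
    simp only [Finset.mem_filter] at hq
    refine ⟨q.image σ, ?_, by simp [Finset.image_image, Finset.image_id']⟩
    simp only [Finset.mem_filter]
    refine ⟨(hσ q).mp hq.1, ?_, ?_⟩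
    · exact Finset.mem_image_of_mem σ hq.2.1
    · rw [Finset.card_image_of_injective _ σ.injective]; exact hq.2.2
end
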